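/- Measure-many fairness: let B be a BSCC of a quantum Markov chain (H, E), X a nonzero subspace of B, and define Ẽ(ρ) = P_{X^⊥} E(ρ) P_{X^⊥} where X^⊥ is the ortho-complement of X in H. Then for every |ψ⟩ ∈ B, lim_{i→∞} tr(Ẽ^i(|ψ⟩⟨ψ|)) = 0. -/

import Mathlib

open Matrix Filter Topology
open scoped ComplexOrder

/-- The matrix of the orthogonal projection onto a subspace `X`. -/
noncomputable def projMat {d : ℕ} (X : Submodule ℂ (EuclideanSpace ℂ (Fin d))) :
    Matrix (Fin d) (Fin d) ℂ :=
  Matrix.toEuclideanLin.symm ((X.subtypeL.comp (Submodule.orthogonalProjection X)).toLinearMap)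

/-- The support of an operator: the range of the associated linear map. -/
noncomputable def matSupp {d : ℕ} (A : Matrix (Fin d) (Fin d) ℂ) :
    Submodule ℂ (EuclideanSpace ℂ (Fin d)) :=
  LinearMap.range (Matrix.toEuclideanLin A)

/-- The outer product `|v⟩⟨v|`. -/
noncomputable def outer {d : ℕ} (v : EuclideanSpace ℂ (Fin d)) : Matrix (Fin d) (Fin d) ℂ :=
  fun i j => v i * star (v j)

/-- The completely positive map `A ↦ ∑ i, E i * A * (E i)†` given by Kraus operators `E`. -/
noncomputable def krausMap {d m : ℕ} (E : Fin m → Matrix (Fin d) (Fin d) ℂ)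
    (A : Matrix (Fin d) (Fin d) ℂ) : Matrix (Fin d) (Fin d) ℂ :=
  ∑ i, E i * A * (E i)ᴴ

/-- The reachable space of a state `ρ`: the join of the supports of all iterates. -/
noncomputable def Reach {d m : ℕ} (E : Fin m → Matrix (Fin d) (Fin d) ℂ)
    (ρ : Matrix (Fin d) (Fin d) ℂ) : Submodule ℂ (EuclideanSpace ℂ (Fin d)) :=
  ⨆ n : ℕ, matSupp ((krausMap E)^[n] ρ)

/-- A BSCC: a nonzero invariant subspace `B` such that the reachable space of every
nonzero vector of `B` is exactly `B`. -/
noncomputable def IsBSCC {d m : ℕ} (E : Fin m → Matrix (Fin d) (Fin d) ℂ)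
    (B : Submodule ℂ (EuclideanSpace ℂ (Fin d))) : Prop :=
  B ≠ ⊥ ∧
  (∀ ρ : Matrix (Fin d) (Fin d) ℂ, ρ.PosSemidef → matSupp ρ ≤ B →
      matSupp (krausMap E ρ) ≤ B) ∧
  (∀ v : EuclideanSpace ℂ (Fin d), v ∈ B → v ≠ 0 → Reach E (outer v) = B)

/-!
The traces `tr Ẽⁱ(ψ)` decrease to some `c`. By compactness the orbit has a cluster point `σ`:
a state supported in `B` with `tr Ẽʲ(σ) = c` for every `j`. If `Ẽ` loses no trace on a state
`τ`, then `P_X E(τ) P_X = 0`, hence `Ẽ(τ) = E(τ)`; so `Ẽʲ(σ) = Eʲ(σ)` and `Eʲ⁺¹(σ)` is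
supported in `X^⊥`. If `c ≠ 0`, a nonzero vector `u` with `|u⟩⟨u| ≤ E(σ)` then reaches only
`X^⊥`, while by the BSCC property it reaches all of `B ⊇ X`; hence `c = 0`.
-/

namespace Matrix.PosSemidef

variable {n : Type*} [Fintype n] {A Q : Matrix n n ℂ}

open scoped MatrixOrder in
lemma mul_eq_zero_of_conj_eq_zero (hA : A.PosSemidef) (hQ : Q.IsHermitian)
    (h : Q * A * Q = 0) : A * Q = 0 := by
  classical
  obtain ⟨B, rfl⟩ := CStarAlgebra.nonneg_iff_eq_star_mul_self.mp hA.nonneg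
  have hBQ : B * Q = 0 := by
    rw [← conjTranspose_mul_self_eq_zero, conjTranspose_mul, hQ.eq]
    simpa only [star_eq_conjTranspose, Matrix.mul_assoc] using h
  rw [Matrix.mul_assoc, hBQ, Matrix.mul_zero]

lemma re_apply_le_trace_re (hA : A.PosSemidef) (i : n) : (A i i).re ≤ A.trace.re := by
  rw [trace, Complex.re_sum]
  exact Finset.single_le_sum (f := fun k => (A k k).re)
    (fun k _ => (Complex.nonneg_iff.mp hA.diag_nonneg).1) (Finset.mem_univ i)

open scoped MatrixOrder in
lemma norm_apply_le_trace_re (hA : A.PosSemidef) (i j : n) : ‖A i j‖ ≤ A.trace.re := by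
  classical
  obtain ⟨B, hB⟩ := CStarAlgebra.nonneg_iff_eq_star_mul_self.mp hA.nonneg
  set col : n → EuclideanSpace ℂ n := fun k => WithLp.toLp 2 (Bᵀ k)
  have hentry : ∀ k l, A k l = inner ℂ (col k) (col l) := by
    intro k l
    rw [inner_matrix_col_col, hB, star_eq_conjTranspose]
  have hnorm : ∀ k, ‖col k‖ ^ 2 = (A k k).re := by
    intro k
    rw [hentry, inner_self_eq_norm_sq_to_K]
    norm_cast
  have hCS : ‖A i j‖ ≤ ‖col i‖ * ‖col j‖ := hentry i j ▸ norm_inner_le_norm _ _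
  nlinarith [hnorm i, hnorm j, hA.re_apply_le_trace_re i, hA.re_apply_le_trace_re j,
    sq_nonneg (‖col i‖ - ‖col j‖)]

lemma trace_eq_ofReal_re (hA : A.PosSemidef) : A.trace = (A.trace.re : ℂ) :=
  Complex.ext rfl (by simp [← (Complex.nonneg_iff.mp hA.trace_nonneg).2])

end Matrix.PosSemidef

variable {d : ℕ}

section Support

variable {A C : Matrix (Fin d) (Fin d) ℂ} {S : Submodule ℂ (EuclideanSpace ℂ (Fin d))}

lemma matSupp_eq_orthogonal_ker (hA : A.IsHermitian) :
    matSupp A = (LinearMap.ker (toEuclideanLin A))ᗮ := by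
  rw [LinearMap.orthogonal_ker, ← toEuclideanLin_conjTranspose_eq_adjoint, hA.eq]
  rfl

lemma matSupp_le_matSupp_add (hA : A.PosSemidef) (hC : C.PosSemidef) :
    matSupp A ≤ matSupp (A + C) := by
  rw [matSupp_eq_orthogonal_ker hA.isHermitian, matSupp_eq_orthogonal_ker (hA.add hC).isHermitian]
  refine Submodule.orthogonal_le fun y hy => ?_
  have hsum : star y.ofLp ⬝ᵥ A *ᵥ y.ofLp + star y.ofLp ⬝ᵥ C *ᵥ y.ofLp = 0 := by
    have hy' : (A + C) *ᵥ y.ofLp = 0 := congrArg WithLp.ofLp hy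
    rw [← dotProduct_add, ← add_mulVec, hy', dotProduct_zero]
  have hA0 := (add_eq_zero_iff_of_nonneg (hA.dotProduct_mulVec_nonneg _)
    (hC.dotProduct_mulVec_nonneg _)).mp hsum |>.1
  simp [LinearMap.mem_ker, toLpLin_apply, (hA.dotProduct_mulVec_zero_iff _).mp hA0]

lemma matSupp_mul_le_map (M N : Matrix (Fin d) (Fin d) ℂ) :
    matSupp (M * N) ≤ (matSupp N).map (toEuclideanLin M) := by
  rw [matSupp, matSupp, toLpLin_mul_same, LinearMap.range_comp]

lemma matSupp_mul_le_left (M N : Matrix (Fin d) (Fin d) ℂ) : matSupp (M * N) ≤ matSupp M := by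
  rw [matSupp, matSupp, toLpLin_mul_same]
  exact LinearMap.range_comp_le_range _ _

lemma toEuclideanLin_projMat (S : Submodule ℂ (EuclideanSpace ℂ (Fin d))) :
    toEuclideanLin (projMat S) = S.starProjection.toLinearMap :=
  LinearEquiv.apply_symm_apply _ _

lemma projMat_isHermitian (S : Submodule ℂ (EuclideanSpace ℂ (Fin d))) :
    (projMat S).IsHermitian := by
  rw [← isSymmetric_toEuclideanLin_iff, toEuclideanLin_projMat]
  exact S.starProjection_isSymmetric

lemma projMat_add_projMat_orthogonal (S : Submodule ℂ (EuclideanSpace ℂ (Fin d))) :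
    projMat S + projMat Sᗮ = 1 := by
  apply toEuclideanLin.injective
  ext1 y
  simp [toEuclideanLin_projMat, S.starProjection_orthogonal]

lemma projMat_mul_eq_self_iff {M : Matrix (Fin d) (Fin d) ℂ} :
    projMat S * M = M ↔ matSupp M ≤ S := by
  rw [← toEuclideanLin.injective.eq_iff, toLpLin_mul_same, toEuclideanLin_projMat, matSupp]
  constructor
  · rintro h _ ⟨y, rfl⟩
    rw [← h]
    exact S.starProjection_apply_mem _
  · intro h
    ext1 y
    exact S.starProjection_eq_self_iff.mpr (h ⟨y, rfl⟩)

lemma matSupp_projMat (S : Submodule ℂ (EuclideanSpace ℂ (Fin d))) :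
    matSupp (projMat S) = S := by
  rw [matSupp, toEuclideanLin_projMat]
  exact S.range_starProjection

lemma matSupp_projMat_mul_le (S : Submodule ℂ (EuclideanSpace ℂ (Fin d)))
    (M : Matrix (Fin d) (Fin d) ℂ) : matSupp (projMat S * M) ≤ S :=
  (matSupp_mul_le_left _ _).trans (matSupp_projMat S).le

lemma projMat_mul_self (S : Submodule ℂ (EuclideanSpace ℂ (Fin d))) :
    projMat S * projMat S = projMat S :=
  projMat_mul_eq_self_iff.mpr (matSupp_projMat S).le

lemma matSupp_compress_le {X B : Submodule ℂ (EuclideanSpace ℂ (Fin d))} (hXB : X ≤ B)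
    {N : Matrix (Fin d) (Fin d) ℂ} (hN : matSupp N ≤ B) :
    matSupp (projMat Xᗮ * N * projMat Xᗮ) ≤ B := by
  have hP : B.map (toEuclideanLin (projMat Xᗮ)) ≤ B := by
    rintro _ ⟨y, hy, rfl⟩
    rw [toEuclideanLin_projMat, X.starProjection_orthogonal]
    exact B.sub_mem hy (hXB (X.starProjection_apply_mem y))
  calc matSupp (projMat Xᗮ * N * projMat Xᗮ)
    _ ≤ matSupp (projMat Xᗮ * N) := matSupp_mul_le_left _ _
    _ ≤ (matSupp N).map (toEuclideanLin (projMat Xᗮ)) := matSupp_mul_le_map _ _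
    _ ≤ B := (Submodule.map_mono hN).trans hP

lemma trace_compress_add_trace_compress (X : Submodule ℂ (EuclideanSpace ℂ (Fin d)))
    (M : Matrix (Fin d) (Fin d) ℂ) :
    (projMat Xᗮ * M * projMat Xᗮ).trace + (projMat X * M * projMat X).trace = M.trace := by
  rw [trace_mul_cycle, projMat_mul_self, trace_mul_cycle, projMat_mul_self, ← trace_add,
    ← Matrix.add_mul, add_comm, projMat_add_projMat_orthogonal, Matrix.one_mul]

end Support

lemma outer_posSemidef (v : EuclideanSpace ℂ (Fin d)) : (outer v).PosSemidef :=
  posSemidef_vecMulVec_self_star v.ofLp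

lemma outer_mulVec (v : EuclideanSpace ℂ (Fin d)) (w : Fin d → ℂ) :
    outer v *ᵥ w = (star v.ofLp ⬝ᵥ w) • v.ofLp := by
  ext i
  simp [outer, mulVec, dotProduct, Finset.mul_sum, mul_comm, mul_left_comm]

lemma matSupp_outer_le {v : EuclideanSpace ℂ (Fin d)} {S : Submodule ℂ (EuclideanSpace ℂ (Fin d))}
    (hv : v ∈ S) : matSupp (outer v) ≤ S := by
  rintro _ ⟨w, rfl⟩
  rw [toLpLin_apply, outer_mulVec, WithLp.toLp_smul, WithLp.toLp_ofLp]
  exact S.smul_mem _ hv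

lemma mem_matSupp_outer {v : EuclideanSpace ℂ (Fin d)} (hv : v ≠ 0) : v ∈ matSupp (outer v) := by
  have hvv : star v.ofLp ⬝ᵥ v.ofLp ≠ 0 := fun h =>
    hv (by simpa using dotProduct_star_self_eq_zero.mp h)
  refine ⟨(star v.ofLp ⬝ᵥ v.ofLp)⁻¹ • v, ?_⟩
  rw [map_smul, toLpLin_apply, outer_mulVec, WithLp.toLp_smul, inv_smul_smul₀ hvv]

lemma Matrix.PosSemidef.exists_outer_le {σ : Matrix (Fin d) (Fin d) ℂ} (hσ : σ.PosSemidef)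
    (hσ0 : σ ≠ 0) : ∃ u ≠ 0, (σ - outer u).PosSemidef := by
  classical
  obtain ⟨k, v, rfl⟩ := posSemidef_iff_eq_sum_vecMulVec.mp hσ
  obtain ⟨i, hi⟩ : ∃ i, v i ≠ 0 := by
    by_contra! h
    exact hσ0 (by simp [h])
  have houter : vecMulVec (v i) (star (v i)) = outer (WithLp.toLp 2 (v i)) := rfl
  refine ⟨WithLp.toLp 2 (v i), fun h => hi (congrArg WithLp.ofLp h), ?_⟩
  rw [← Finset.add_sum_erase _ _ (Finset.mem_univ i), houter, add_sub_cancel_left]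
  exact posSemidef_sum _ fun j _ => posSemidef_vecMulVec_self_star (v j)

section Kraus

variable {m : ℕ} (E : Fin m → Matrix (Fin d) (Fin d) ℂ)

noncomputable def krausLinearMap : Matrix (Fin d) (Fin d) ℂ →ₗ[ℂ] Matrix (Fin d) (Fin d) ℂ where
  toFun := krausMap E
  map_add' A C := by
    simp only [krausMap, Matrix.mul_add, Matrix.add_mul, Finset.sum_add_distrib]
  map_smul' c A := by simp [krausMap, Finset.smul_sum]

/-- The paper's `Ẽ` when `P = projMat Xᗮ`. -/
noncomputable def compressedKraus (P : Matrix (Fin d) (Fin d) ℂ) :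
    Matrix (Fin d) (Fin d) ℂ →ₗ[ℂ] Matrix (Fin d) (Fin d) ℂ :=
  LinearMap.mulRight ℂ P ∘ₗ LinearMap.mulLeft ℂ P ∘ₗ krausLinearMap E

variable {E}

lemma compressedKraus_apply (P A : Matrix (Fin d) (Fin d) ℂ) :
    compressedKraus E P A = P * krausMap E A * P := rfl

lemma iterate_krausMap (n : ℕ) : (krausMap E)^[n] = ⇑(krausLinearMap E ^ n) :=
  (Module.End.coe_pow (krausLinearMap E) n).symm

lemma krausMap_posSemidef {A : Matrix (Fin d) (Fin d) ℂ} (hA : A.PosSemidef) :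
    (krausMap E A).PosSemidef :=
  posSemidef_sum _ fun i _ => hA.mul_mul_conjTranspose_same (E i)

lemma iterate_krausMap_posSemidef {A : Matrix (Fin d) (Fin d) ℂ} (hA : A.PosSemidef) (n : ℕ) :
    ((krausMap E)^[n] A).PosSemidef :=
  Function.Iterate.rec PosSemidef hA (fun _ => krausMap_posSemidef) n

lemma trace_krausMap (hE : ∑ i, (E i)ᴴ * E i = 1) (A : Matrix (Fin d) (Fin d) ℂ) :
    (krausMap E A).trace = A.trace := by
  simp_rw [krausMap, trace_sum, trace_mul_cycle (E _)]
  rw [← trace_sum, ← Finset.sum_mul, hE, Matrix.one_mul]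

lemma matSupp_iterate_krausMap_mono {A C : Matrix (Fin d) (Fin d) ℂ} (hA : A.PosSemidef)
    (hCA : (C - A).PosSemidef) (n : ℕ) :
    matSupp ((krausMap E)^[n] A) ≤ matSupp ((krausMap E)^[n] C) := by
  have hC : C = A + (C - A) := (add_sub_cancel A C).symm
  rw [hC, iterate_krausMap, map_add, ← iterate_krausMap]
  exact matSupp_le_matSupp_add (iterate_krausMap_posSemidef hA n)
    (iterate_krausMap_posSemidef hCA n)

lemma compressedKraus_posSemidef {P A : Matrix (Fin d) (Fin d) ℂ} (hP : P.IsHermitian)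
    (hA : A.PosSemidef) : (compressedKraus E P A).PosSemidef := by
  simpa only [compressedKraus_apply, hP.eq] using
    (krausMap_posSemidef hA).mul_mul_conjTranspose_same P

lemma iterate_compressedKraus_posSemidef {P A : Matrix (Fin d) (Fin d) ℂ} (hP : P.IsHermitian)
    (hA : A.PosSemidef) (n : ℕ) : ((compressedKraus E P)^[n] A).PosSemidef :=
  Function.Iterate.rec PosSemidef hA (fun _ => compressedKraus_posSemidef hP) n

end Kraus

section Compression

variable {m : ℕ} {E : Fin m → Matrix (Fin d) (Fin d) ℂ}
  {X : Submodule ℂ (EuclideanSpace ℂ (Fin d))}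

lemma trace_re_compressedKraus_le (hE : ∑ i, (E i)ᴴ * E i = 1) {A : Matrix (Fin d) (Fin d) ℂ}
    (hA : A.PosSemidef) : (compressedKraus E (projMat Xᗮ) A).trace.re ≤ A.trace.re := by
  have hsplit := congrArg Complex.re (trace_compress_add_trace_compress X (krausMap E A))
  have hQ := (compressedKraus_posSemidef (E := E) (projMat_isHermitian X) hA).trace_nonneg
  rw [trace_krausMap hE, Complex.add_re] at hsplit
  rw [compressedKraus_apply] at hQ ⊢
  linarith [(Complex.nonneg_iff.mp hQ).1]

lemma antitone_trace_re_iterate_compressedKraus (hE : ∑ i, (E i)ᴴ * E i = 1)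
    {A : Matrix (Fin d) (Fin d) ℂ} (hA : A.PosSemidef) :
    Antitone fun i => ((compressedKraus E (projMat Xᗮ))^[i] A).trace.re :=
  antitone_nat_of_succ_le fun i => by
    rw [Function.iterate_succ_apply']
    exact trace_re_compressedKraus_le hE
      (iterate_compressedKraus_posSemidef (projMat_isHermitian _) hA i)

lemma exists_tendsto_trace_iterate_compressedKraus (hE : ∑ i, (E i)ᴴ * E i = 1)
    {A : Matrix (Fin d) (Fin d) ℂ} (hA : A.PosSemidef) :
    ∃ c : ℝ, Tendsto (fun i => ((compressedKraus E (projMat Xᗮ))^[i] A).trace) atTop (𝓝 c) := by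
  have hpsd := iterate_compressedKraus_posSemidef (E := E) (projMat_isHermitian Xᗮ) hA
  refine ⟨_, ((Complex.continuous_ofReal.tendsto _).comp (tendsto_atTop_ciInf
    (antitone_trace_re_iterate_compressedKraus hE hA) ?_)).congr
      fun i => (hpsd i).trace_eq_ofReal_re.symm⟩
  exact ⟨0, by rintro _ ⟨i, rfl⟩; exact (Complex.nonneg_iff.mp (hpsd i).trace_nonneg).1⟩

lemma compressedKraus_eq_krausMap_of_trace_eq (hE : ∑ i, (E i)ᴴ * E i = 1)
    {τ : Matrix (Fin d) (Fin d) ℂ} (hτ : τ.PosSemidef)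
    (h : (compressedKraus E (projMat Xᗮ) τ).trace = τ.trace) :
    compressedKraus E (projMat Xᗮ) τ = krausMap E τ := by
  have hK := krausMap_posSemidef (E := E) hτ
  have hQKQ : compressedKraus E (projMat X) τ = 0 := by
    rw [← (compressedKraus_posSemidef (E := E) (projMat_isHermitian X) hτ).trace_eq_zero_iff]
    have hsplit := trace_compress_add_trace_compress X (krausMap E τ)
    rw [trace_krausMap hE, ← compressedKraus_apply, h] at hsplit
    exact add_eq_left.mp hsplit
  have hKQ := hK.mul_eq_zero_of_conj_eq_zero (projMat_isHermitian X) hQKQ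
  have hQK : projMat X * krausMap E τ = 0 := by
    simpa [hK.isHermitian.eq, (projMat_isHermitian X).eq] using congrArg conjTranspose hKQ
  rw [compressedKraus_apply, eq_sub_of_add_eq' (projMat_add_projMat_orthogonal X),
    Matrix.sub_mul, Matrix.one_mul, hQK, sub_zero, Matrix.mul_sub, hKQ, Matrix.mul_one, sub_zero]

lemma iterate_compressedKraus_eq_of_trace_eq (hE : ∑ i, (E i)ᴴ * E i = 1)
    {σ : Matrix (Fin d) (Fin d) ℂ} (hσ : σ.PosSemidef)
    (h : ∀ j, ((compressedKraus E (projMat Xᗮ))^[j] σ).trace = σ.trace) (j : ℕ) :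
    (compressedKraus E (projMat Xᗮ))^[j] σ = (krausMap E)^[j] σ := by
  induction j with
  | zero => rfl
  | succ j ih =>
    have hj := h (j + 1)
    rw [Function.iterate_succ_apply', ih] at hj
    rw [Function.iterate_succ_apply', Function.iterate_succ_apply', ih]
    refine compressedKraus_eq_krausMap_of_trace_eq hE (iterate_krausMap_posSemidef hσ j) ?_
    rw [hj, ← ih, h j]

lemma matSupp_iterate_krausMap_succ_le (hE : ∑ i, (E i)ᴴ * E i = 1)
    {σ : Matrix (Fin d) (Fin d) ℂ} (hσ : σ.PosSemidef)
    (h : ∀ j, ((compressedKraus E (projMat Xᗮ))^[j] σ).trace = σ.trace) (j : ℕ) :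
    matSupp ((krausMap E)^[j + 1] σ) ≤ Xᗮ := by
  rw [← iterate_compressedKraus_eq_of_trace_eq hE hσ h, Function.iterate_succ_apply',
    compressedKraus_apply]
  exact (matSupp_mul_le_left _ _).trans (matSupp_projMat_mul_le _ _)

end Compression

section BSCC

variable {m : ℕ} {E : Fin m → Matrix (Fin d) (Fin d) ℂ}
  {B : Submodule ℂ (EuclideanSpace ℂ (Fin d))}

lemma IsBSCC.matSupp_iterate_compressedKraus_le (hB : IsBSCC E B)
    {X : Submodule ℂ (EuclideanSpace ℂ (Fin d))} (hXB : X ≤ B) {A : Matrix (Fin d) (Fin d) ℂ}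
    (hA : A.PosSemidef) (hAB : matSupp A ≤ B) (n : ℕ) :
    matSupp ((compressedKraus E (projMat Xᗮ))^[n] A) ≤ B := by
  induction n with
  | zero => exact hAB
  | succ n ih =>
    rw [Function.iterate_succ_apply', compressedKraus_apply]
    exact matSupp_compress_le hXB
      (hB.2.1 _ (iterate_compressedKraus_posSemidef (projMat_isHermitian _) hA n) ih)

lemma IsBSCC.le_of_forall_matSupp_iterate_le (hB : IsBSCC E B) {σ : Matrix (Fin d) (Fin d) ℂ}
    (hσ : σ.PosSemidef) (hσ0 : σ ≠ 0) (hσB : matSupp σ ≤ B)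
    {S : Submodule ℂ (EuclideanSpace ℂ (Fin d))} (hS : ∀ n, matSupp ((krausMap E)^[n] σ) ≤ S) :
    B ≤ S := by
  obtain ⟨u, hu0, hu⟩ := hσ.exists_outer_le hσ0
  have hle := matSupp_iterate_krausMap_mono (E := E) (outer_posSemidef u) hu
  have huB : u ∈ B := hσB (hle 0 (mem_matSupp_outer hu0))
  rw [← hB.2.2 u huB hu0]
  exact iSup_le fun n => (hle n).trans (hS n)

lemma IsBSCC.trace_eq_zero_of_trace_iterate_compressedKraus_eq (hE : ∑ i, (E i)ᴴ * E i = 1)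
    (hB : IsBSCC E B) {X : Submodule ℂ (EuclideanSpace ℂ (Fin d))} (hXB : X ≤ B) (hX : X ≠ ⊥)
    {σ : Matrix (Fin d) (Fin d) ℂ} (hσ : σ.PosSemidef) (hσB : matSupp σ ≤ B)
    (h : ∀ j, ((compressedKraus E (projMat Xᗮ))^[j] σ).trace = σ.trace) :
    σ.trace = 0 := by
  by_contra hσ0
  have hKσ0 : krausMap E σ ≠ 0 := fun h0 => hσ0 (by rw [← trace_krausMap hE, h0, trace_zero])
  have hBX : B ≤ Xᗮ := hB.le_of_forall_matSupp_iterate_le (krausMap_posSemidef hσ) hKσ0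
    (hB.2.1 σ hσ hσB) fun n => by
      rw [← Function.iterate_succ_apply (krausMap E)]
      exact matSupp_iterate_krausMap_succ_le hE hσ h n
  exact hX (X.orthogonal_disjoint.eq_bot_of_le (hXB.trans hBX))

end BSCC

section Compactness

variable {n : Type*} [Fintype n]

lemma isClosed_setOf_posSemidef : IsClosed {A : Matrix n n ℂ | A.PosSemidef} := by
  simp_rw [posSemidef_iff_dotProduct_mulVec, Set.ofPred_and, Set.ofPred_forall]
  refine (isClosed_eq (continuous_id.matrix_conjTranspose) continuous_id).inter
    (isClosed_iInter fun x => isClosed_le continuous_const ?_)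
  exact continuous_const.dotProduct (continuous_id.matrix_mulVec continuous_const)

lemma isCompact_setOf_posSemidef_trace_re_le (R : ℝ) :
    IsCompact {A : Matrix n n ℂ | A.PosSemidef ∧ A.trace.re ≤ R} := by
  have hbox : IsCompact (Set.univ.pi fun _ : n => Set.univ.pi fun _ : n =>
      Metric.closedBall (0 : ℂ) R) :=
    isCompact_univ_pi fun _ => isCompact_univ_pi fun _ => isCompact_closedBall 0 R
  refine hbox.of_isClosed_subset (isClosed_setOf_posSemidef.inter
    (isClosed_le (Complex.continuous_re.comp continuous_id.matrix_trace) continuous_const)) ?_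
  rintro A ⟨hA, hR⟩ i - j -
  simpa using (hA.norm_apply_le_trace_re i j).trans hR

end Compactness

lemma isClosed_setOf_matSupp_le (S : Submodule ℂ (EuclideanSpace ℂ (Fin d))) :
    IsClosed {A : Matrix (Fin d) (Fin d) ℂ | matSupp A ≤ S} := by
  simp_rw [← projMat_mul_eq_self_iff]
  exact isClosed_eq (continuous_const.matrix_mul continuous_id) continuous_id

lemma apply_iterate_eq_of_mapClusterPt {α β : Type*} [TopologicalSpace α] [TopologicalSpace β]
    [T2Space β] {f : α → α} {g : α → β} (hf : Continuous f) (hg : Continuous g) {x : α} {c : β}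
    (hc : Tendsto (fun n => g (f^[n] x)) atTop (𝓝 c)) {y : α}
    (hy : MapClusterPt y atTop (fun n => f^[n] x)) (j : ℕ) : g (f^[j] y) = c := by
  have hcl := hy.continuousAt_comp (hg.comp (hf.iterate j)).continuousAt
  have hlim : Tendsto (fun n => g (f^[j] (f^[n] x))) atTop (𝓝 c) := by
    simp_rw [← Function.iterate_add_apply]
    exact hc.comp (tendsto_atTop_mono (Nat.le_add_left · j) tendsto_id)
  exact eq_of_nhds_neBot (hcl.neBot.mono (inf_le_inf_left _ hlim))

/-- Measure-many fairness: absorbing at a nonzero subspace of a BSCC, the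
non-absorbed probability vanishes for any initial pure state in the BSCC. -/
theorem stmt18 {d m : ℕ} (E : Fin m → Matrix (Fin d) (Fin d) ℂ)
    (hE : ∑ i, (E i)ᴴ * E i = 1)
    (B X : Submodule ℂ (EuclideanSpace ℂ (Fin d))) (hB : IsBSCC E B) (hXB : X ≤ B) (hX : X ≠ ⊥) :
    ∀ ψ : EuclideanSpace ℂ (Fin d), ψ ∈ B →
      Tendsto
        (fun i : ℕ => ((fun A : Matrix (Fin d) (Fin d) ℂ => projMat Xᗮ * krausMap E A * projMat Xᗮ)^[i] (outer ψ)).trace)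
        atTop (nhds 0) := by
  intro ψ hψ
  change Tendsto (fun i => ((compressedKraus E (projMat Xᗮ))^[i] (outer ψ)).trace) atTop (𝓝 0)
  set F := compressedKraus E (projMat Xᗮ)
  have hψ₀ := outer_posSemidef ψ
  obtain ⟨c, hc⟩ := exists_tendsto_trace_iterate_compressedKraus (X := X) hE hψ₀
  obtain ⟨σ, ⟨⟨hσ, -⟩, hσB⟩, hσc⟩ :=
    ((isCompact_setOf_posSemidef_trace_re_le (outer ψ).trace.re).inter_right
      (isClosed_setOf_matSupp_le B)).exists_mapClusterPt (f := atTop) <|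
      tendsto_principal.mpr <| .of_forall fun i =>
        ⟨⟨iterate_compressedKraus_posSemidef (projMat_isHermitian _) hψ₀ i,
          antitone_trace_re_iterate_compressedKraus hE hψ₀ (Nat.zero_le i)⟩,
        hB.matSupp_iterate_compressedKraus_le hXB hψ₀ (matSupp_outer_le hψ) i⟩
  have hσtr := apply_iterate_eq_of_mapClusterPt F.continuous_of_finiteDimensional
    (g := trace) continuous_id.matrix_trace hc hσc
  have hσ0 := hB.trace_eq_zero_of_trace_iterate_compressedKraus_eq hE hXB hX hσ hσB
    fun j => (hσtr j).trans (hσtr 0).symm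
  rwa [← hσtr 0, Function.iterate_zero_apply, hσ0] at hc
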